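/- arXiv:1408.1147 — 4 statements merged into one kernel-verified Lean document; each statement's English description precedes it below -/
import Mathlib

section
/- For any two distinct affine functions f, g from Z_2^γ × Z_4^δ to Z_4, the sum over all x in Z_2^γ × Z_4^δ of the Lee weight of (f-g)(x) is at least 2^{γ+2δ}, where the Lee weight of 0,1,2,3 in Z_4 is 0,1,2,1 respectively. -/
def IsAffine {G : Type*} [AddCommGroup G] (f : G → ZMod 4) : Prop :=
  ∀ x y : G, f 0 - f x - f y + f (x + y) = 0

def leeWt (a : ZMod 4) : ℕ := if a = 0 then 0 else if a = 2 then 2 else 1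

theorem stmt3 (γ δ : ℕ) (f g : (Fin γ → ZMod 2) × (Fin δ → ZMod 4) → ZMod 4)
    (hf : IsAffine f) (hg : IsAffine g) (hne : f ≠ g) :
    2 ^ (γ + 2 * δ) ≤ ∑ x : (Fin γ → ZMod 2) × (Fin δ → ZMod 4), leeWt (f x - g x) := by
  classical
  have hcard : Fintype.card ((Fin γ → ZMod 2) × (Fin δ → ZMod 4)) = 2 ^ (γ + 2 * δ) := by
    simp only [Fintype.card_prod, Fintype.card_fun, Fintype.card_fin,
      ZMod.card]
    rw [pow_add, pow_mul]
    norm_num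
  have tadd : ∀ x y, f (x + y) - g (x + y) - (f 0 - g 0) =
      (f x - g x - (f 0 - g 0)) + (f y - g y - (f 0 - g 0)) := by
    intro x y
    linear_combination hf x y - hg x y
  have trans : ∀ a, (∑ x : (Fin γ → ZMod 2) × (Fin δ → ZMod 4),
      leeWt (f x - g x + (f a - g a - (f 0 - g 0)))) = ∑ x, leeWt (f x - g x) := by
    intro a
    calc (∑ x : (Fin γ → ZMod 2) × (Fin δ → ZMod 4),
          leeWt (f x - g x + (f a - g a - (f 0 - g 0))))
        = ∑ x, leeWt (f (x + a) - g (x + a)) := by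
          refine Finset.sum_congr rfl fun x _ => ?_
          congr 1
          linear_combination -(tadd x a)
      _ = ∑ x, leeWt (f x - g x) :=
          Fintype.sum_equiv (Equiv.addRight a) _ _ (fun x => rfl)
  by_cases hA : ∃ a, f a - g a - (f 0 - g 0) = 1 ∨ f a - g a - (f 0 - g 0) = 3
  · obtain ⟨a, ha⟩ := hA
    have e1 := trans a
    have e2 := trans (a + a)
    have e3 := trans (a + a + a)
    rw [tadd a a] at e2
    rw [show a + a + a = (a + a) + a from rfl, tadd (a + a) a, tadd a a] at e3
    set s : ZMod 4 := f a - g a - (f 0 - g 0) with hs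
    have key : ∀ u : ZMod 4,
        leeWt u + leeWt (u + s) + leeWt (u + (s + s)) + leeWt (u + (s + s + s)) = 4 := by
      rcases ha with h | h <;> rw [h] <;> decide
    have big : 4 * ∑ x : (Fin γ → ZMod 2) × (Fin δ → ZMod 4), leeWt (f x - g x)
        = ∑ _x : (Fin γ → ZMod 2) × (Fin δ → ZMod 4), 4 := by
      rw [Finset.sum_congr rfl fun x _ => (key (f x - g x)).symm]
      rw [Finset.sum_add_distrib, Finset.sum_add_distrib, Finset.sum_add_distrib,
        e1, e2, e3]
      ring
    rw [Finset.sum_const, Finset.card_univ, hcard, smul_eq_mul] at big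
    omega
  · push_neg at hA
    by_cases hB : ∃ a, f a - g a - (f 0 - g 0) = 2
    · obtain ⟨a, ha⟩ := hB
      have e1 := trans a
      rw [ha] at e1
      have key : ∀ u : ZMod 4, leeWt u + leeWt (u + 2) = 2 := by decide
      have big : 2 * ∑ x : (Fin γ → ZMod 2) × (Fin δ → ZMod 4), leeWt (f x - g x)
          = ∑ _x : (Fin γ → ZMod 2) × (Fin δ → ZMod 4), 2 := by
        rw [Finset.sum_congr rfl fun x _ => (key (f x - g x)).symm]
        rw [Finset.sum_add_distrib, e1]
        ring
      rw [Finset.sum_const, Finset.card_univ, hcard, smul_eq_mul] at big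
      omega
    · push_neg at hB
      have hzero : ∀ a, f a - g a = f 0 - g 0 := by
        intro a
        have h1 := (hA a).1
        have h2 := (hA a).2
        have h3 := hB a
        have : ∀ u : ZMod 4, u ≠ 1 → u ≠ 3 → u ≠ 2 → u = 0 := by decide
        have h4 := this _ h1 h2 h3
        linear_combination h4
      obtain ⟨x₀, hx₀⟩ := Function.ne_iff.mp hne
      have hcne : f 0 - g 0 ≠ 0 := by
        rw [← hzero x₀]
        exact sub_ne_zero.mpr hx₀
      have hone : ∀ u : ZMod 4, u ≠ 0 → 1 ≤ leeWt u := by decide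
      calc 2 ^ (γ + 2 * δ) = ∑ _x : (Fin γ → ZMod 2) × (Fin δ → ZMod 4), 1 := by
            rw [Finset.sum_const, Finset.card_univ, hcard, smul_eq_mul, mul_one]
        _ ≤ ∑ x : (Fin γ → ZMod 2) × (Fin δ → ZMod 4), leeWt (f x - g x) := by
            refine Finset.sum_le_sum fun x _ => ?_
            rw [hzero x]
            exact hone _ hcne
end

section
/- Any nonzero group homomorphism h : Z_2^γ × Z_4^δ → Z_4 satisfies: the sum over all x in Z_2^γ × Z_4^δ of the Lee weight of h(x) equals 2^{γ+2δ} (where Lee weight of 0,1,2,3 is 0,1,2,1). -/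
noncomputable def iChar : AddChar (ZMod 4) ℂ := AddChar.zmodChar 4 Complex.I_pow_four

lemma iChar_apply (a : ZMod 4) : iChar a = Complex.I ^ a.val :=
  AddChar.zmodChar_apply _ a

lemma leeWt_eq_one_sub_re_iChar (a : ZMod 4) : (leeWt a : ℝ) = 1 - (iChar a).re := by
  obtain rfl | rfl | rfl | rfl : a = 0 ∨ a = 1 ∨ a = 2 ∨ a = 3 := by revert a; decide
  all_goals norm_num +decide [leeWt, iChar_apply, ZMod.val_ofNat, ZMod.val_one, pow_succ]

lemma eq_zero_of_leeWt_eq_zero {a : ZMod 4} (ha : leeWt a = 0) : a = 0 := by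
  unfold leeWt at ha
  split_ifs at ha with h0
  exact h0

lemma iChar_ne_one {a : ZMod 4} (ha : a ≠ 0) : iChar a ≠ 1 := by
  intro h1
  have : (leeWt a : ℝ) = 0 := by simp [leeWt_eq_one_sub_re_iChar, h1]
  exact ha (eq_zero_of_leeWt_eq_zero (by exact_mod_cast this))

theorem sum_leeWt_eq_card {G : Type*} [AddCommGroup G] [Fintype G] (h : G →+ ZMod 4)
    (hne : h ≠ 0) : ∑ x, leeWt (h x) = Fintype.card G := by
  obtain ⟨x₀, hx₀⟩ : ∃ x, h x ≠ 0 := by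
    by_contra! hzero
    exact hne (AddMonoidHom.ext hzero)
  have hψ : iChar.compAddMonoidHom h ≠ 0 :=
    AddChar.ne_one_iff.mpr ⟨x₀, iChar_ne_one hx₀⟩
  have hsum : ∑ x, iChar (h x) = 0 := AddChar.sum_eq_zero_iff_ne_zero.mpr hψ
  have hreal : (∑ x, leeWt (h x) : ℝ) = Fintype.card G := by
    simp only [leeWt_eq_one_sub_re_iChar, Finset.sum_sub_distrib, ← Complex.re_sum, hsum]
    simp
  exact_mod_cast hreal

theorem stmt4 (γ δ : ℕ) (h : ((Fin γ → ZMod 2) × (Fin δ → ZMod 4)) →+ ZMod 4)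
    (hne : h ≠ 0) :
    ∑ x : (Fin γ → ZMod 2) × (Fin δ → ZMod 4), leeWt (h x) = 2 ^ (γ + 2 * δ) := by
  rw [sum_leeWt_eq_card h hne, pow_add, pow_mul]
  simp
end

section
/- Let r : Z_2^γ × Z_4^δ̇ → {1,3} ⊂ Z_4 be an affine function. Then r(v) = r(-v) for all v, and for every affine function g : Z_2^γ × Z_4^δ̇ → Z_4, the function v ↦ g(r(v)·v) · r(v) is also affine. -/
def smul4 {γ δ : ℕ} (c : ZMod 4) (v : (Fin γ → ZMod 2) × (Fin δ → ZMod 4)) :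
    (Fin γ → ZMod 2) × (Fin δ → ZMod 4) :=
  (v.1, fun i => c * v.2 i)

lemma smul4_one {γ δ : ℕ} (v : (Fin γ → ZMod 2) × (Fin δ → ZMod 4)) :
    smul4 1 v = v := by
  unfold smul4
  ext i <;> simp

lemma smul4_three {γ δ : ℕ} (v : (Fin γ → ZMod 2) × (Fin δ → ZMod 4)) :
    smul4 3 v = -v := by
  unfold smul4
  ext i
  · exact (show ∀ a : ZMod 2, a = -a by decide) (v.1 i)
  · exact (show ∀ a : ZMod 4, 3 * a = -a by decide) (v.2 i)

theorem stmt16 (γ δ : ℕ) (r : (Fin γ → ZMod 2) × (Fin δ → ZMod 4) → ZMod 4)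
    (hr : IsAffine r) (hr13 : ∀ v, r v ∈ ({1, 3} : Set (ZMod 4))) :
    (∀ v, r v = r (-v)) ∧
    ∀ g : (Fin γ → ZMod 2) × (Fin δ → ZMod 4) → ZMod 4, IsAffine g →
      IsAffine (fun v => g (smul4 (r v) v) * r v) := by
  have h4 : (4 : ZMod 4) = 0 := by decide
  constructor
  · intro v
    have e := hr v (-v)
    rw [add_neg_cancel] at e
    have h0 := hr13 0
    have h1 := hr13 v
    have h2 := hr13 (-v)
    simp only [Set.mem_insert_iff, Set.mem_singleton_iff] at h0 h1 h2
    rcases h0 with h0 | h0 <;> rcases h1 with h1 | h1 <;> rcases h2 with h2 | h2 <;>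
      rw [h0] at e <;> rw [h1] at e ⊢ <;> rw [h2] at e ⊢ <;> revert e <;> decide
  · intro g hg
    have key : ∀ v, g (smul4 (r v) v) * r v = g 0 * r v + (g v - g 0) := by
      intro v
      have hg' := hg v (-v)
      rw [add_neg_cancel] at hg'
      rcases hr13 v with h | h
      · rw [h, smul4_one]
        ring
      · simp only [Set.mem_singleton_iff] at h
        rw [h, smul4_three]
        linear_combination hg' + (g (-v) - g 0) * h4
    intro x y
    simp only
    rw [key 0, key x, key y, key (x + y)]
    linear_combination g 0 * hr x y + hg x y
end

section
/- The number of group automorphisms of the abelian group Z_2^γ × Z_4^δ equals 2^{δ²+γδ+δ(δ-1)/2} · ∏_{j=1}^{δ}(2^j - 1) · 2^{δγ+γ(γ-1)/2} · ∏_{i=1}^{γ}(2^i - 1). -/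
/-!
Write `π : ℤ/4 → ℤ/2` for reduction and `ι : ℤ/2 → ℤ/4` for `a ↦ 2a`. An additive endomorphism
of `(ℤ/2)^γ × (ℤ/4)^δ` is the same as a block matrix `[[A, B], [C, D]]` with `A, B, C` over `ℤ/2`
and `D` over `ℤ/4`, acting by `(x, y) ↦ (A x + B (π y), ι (C x) + D y)`. Modulo the subgroup
`0 × ι(ℤ/2)^δ`, which it preserves, this map is block triangular with diagonal `A` and `π D`;
hence it is bijective iff `A` and `π D` are invertible, i.e. iff `A` and `D` are (`π` is a local
ring hom). So `|Aut| = |GL_γ(ℤ/2)| · |GL_δ(ℤ/4)| · 2^{2γδ}`, and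
`|GL_δ(ℤ/4)| = |GL_δ(ℤ/2)| · 2^{δ²}` because a matrix over `ℤ/4` is a pair of matrices over `ℤ/2`
(its binary digits) and only the lower digit decides invertibility.
-/

open Matrix Function Finset

theorem AddMonoidHom.ext_zmod {n : ℕ} {M : Type*} [AddMonoid M] {f g : ZMod n →+ M}
    (h : f 1 = g 1) : f = g :=
  (AddMonoidHom.cancel_right (f := Int.castAddHom (ZMod n)) ZMod.intCast_surjective).1
    (AddMonoidHom.ext_int (by simpa using h))

theorem AddMonoidHom.ext_zmod_pi_prod {ι κ M : Type*} [Finite ι] [Finite κ] [DecidableEq ι]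
    [DecidableEq κ] [AddCommMonoid M] {m n : ℕ} {f g : (ι → ZMod m) × (κ → ZMod n) →+ M}
    (hl : ∀ i, f (Pi.single i 1, 0) = g (Pi.single i 1, 0))
    (hr : ∀ k, f (0, Pi.single k 1) = g (0, Pi.single k 1)) : f = g := by
  rw [← f.coprod_unique, ← g.coprod_unique]
  congr 1
  · exact AddMonoidHom.functions_ext' _ _ _ fun i => AddMonoidHom.ext_zmod (hl i)
  · exact AddMonoidHom.functions_ext' _ _ _ fun k => AddMonoidHom.ext_zmod (hr k)

noncomputable def AddEquiv.equivBijectiveHom (M : Type*) [AddGroup M] :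
    (M ≃+ M) ≃ {f : M →+ M // Bijective f} where
  toFun e := ⟨e, e.bijective⟩
  invFun f := AddEquiv.ofBijective f.1 f.2
  left_inv _ := AddEquiv.ext fun _ => rfl
  right_inv _ := rfl

theorem Matrix.isUnit_map_iff {n R S : Type*} [Fintype n] [DecidableEq n] [CommRing R]
    [CommRing S] (f : R →+* S) [IsLocalHom f] (M : Matrix n n R) :
    IsUnit (M.map f) ↔ IsUnit M := by
  rw [isUnit_iff_isUnit_det, isUnit_iff_isUnit_det, ← f.mapMatrix_apply, ← f.map_det,
    _root_.isUnit_map_iff]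

def Matrix.prodEquivOfEquiv {m n R S T : Type*} (e : R ≃ S × T) :
    Matrix m n R ≃ Matrix m n S × Matrix m n T where
  toFun M := (M.map fun r => (e r).1, M.map fun r => (e r).2)
  invFun P := of fun i j => e.symm (P.1 i j, P.2 i j)
  left_inv M := by ext; simp
  right_inv P := by ext <;> simp

theorem Matrix.natCard_zmod (p a b : ℕ) [NeZero p] :
    Nat.card (Matrix (Fin a) (Fin b) (ZMod p)) = p ^ (a * b) := by
  simp [Matrix, ← pow_mul, mul_comm]

theorem Finset.prod_range_pow_sub_pow (q n : ℕ) :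
    ∏ i ∈ range n, (q ^ n - q ^ i) =
      q ^ (n * (n - 1) / 2) * ∏ j ∈ range n, (q ^ (j + 1) - 1) := by
  have factor : ∀ i ∈ range n, q ^ n - q ^ i = q ^ i * (q ^ (n - 1 - i + 1) - 1) := by
    intro i hi
    rw [Nat.mul_sub, mul_one, ← pow_add]
    have := mem_range.mp hi
    congr 2
    omega
  rw [prod_congr rfl factor, prod_mul_distrib, prod_pow_eq_pow_sum, sum_range_id,
    prod_range_reflect (fun j => q ^ (j + 1) - 1) n]

theorem Matrix.card_isUnit_zmod_two (n : ℕ) :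
    Nat.card {A : Matrix (Fin n) (Fin n) (ZMod 2) // IsUnit A} =
      2 ^ (n * (n - 1) / 2) * ∏ j ∈ range n, (2 ^ (j + 1) - 1) := by
  have card_GL : Nat.card {A : Matrix (Fin n) (Fin n) (ZMod 2) // IsUnit A} =
      Nat.card (GL (Fin n) (ZMod 2)) :=
    (Nat.card_congr Submonoid.unitsTypeEquivIsUnitSubmonoid.toEquiv).symm
  rw [card_GL, card_GL_field, ZMod.card,
    Fin.prod_univ_eq_prod_range (fun i => 2 ^ n - 2 ^ i), prod_range_pow_sub_pow]

namespace AutZ2Z4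

def π : ZMod 4 →+* ZMod 2 := ZMod.castHom (by norm_num) _

def ι : ZMod 2 →+ ZMod 4 where
  toFun a := 2 * (a.val : ZMod 4)
  map_zero' := by decide
  map_add' := by decide

def half (v : ZMod 4) : ZMod 2 := (v.val / 2 : ℕ)

theorem π_ι (a : ZMod 2) : π (ι a) = 0 := by revert a; decide

theorem half_ι (a : ZMod 2) : half (ι a) = a := by revert a; decide

theorem ι_half_of_add_self (v : ZMod 4) (h : v + v = 0) : ι (half v) = v := by
  revert v; decide

theorem ι_injective : Injective ι := by decide

theorem mul_ι (d : ZMod 4) (a : ZMod 2) : d * ι a = ι (π d * a) := by revert d a; decide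

instance : IsLocalHom π where
  map_nonunit v h := by
    have hv : π v ≠ 0 := h.ne_zero
    exact IsUnit.of_mul_eq_one v (by revert v; decide)

def binaryDigits : ZMod 4 ≃ ZMod 2 × ZMod 2 where
  toFun v := (π v, half v)
  invFun p := (p.1.val : ZMod 4) + 2 * (p.2.val : ZMod 4)
  left_inv := by decide
  right_inv := by decide

theorem card_isUnit_zmod_four (n : ℕ) :
    Nat.card {D : Matrix (Fin n) (Fin n) (ZMod 4) // IsUnit D} =
      Nat.card {A : Matrix (Fin n) (Fin n) (ZMod 2) // IsUnit A} * 2 ^ (n * n) := by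
  rw [Nat.card_congr ((prodEquivOfEquiv binaryDigits).subtypeEquiv (p := IsUnit)
      (q := fun P => IsUnit P.1) fun D => (isUnit_map_iff π D).symm),
    Nat.card_congr Equiv.prodSubtypeFstEquivSubtypeProd, Nat.card_prod, natCard_zmod]

theorem mulVec_comp_ι {δ : ℕ} (D : Matrix (Fin δ) (Fin δ) (ZMod 4)) (z : Fin δ → ZMod 2) :
    D *ᵥ (ι ∘ z) = ι ∘ (D.map π *ᵥ z) := by
  ext i
  simp [mulVec, dotProduct, mul_ι, map_sum]

theorem π_comp_ι {δ : ℕ} (z : Fin δ → ZMod 2) : π ∘ (ι ∘ z) = 0 :=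
  funext fun j => π_ι (z j)

variable {γ δ : ℕ}

abbrev G (γ δ : ℕ) := (Fin γ → ZMod 2) × (Fin δ → ZMod 4)

def blockHom (A : Matrix (Fin γ) (Fin γ) (ZMod 2)) (B : Matrix (Fin γ) (Fin δ) (ZMod 2))
    (C : Matrix (Fin δ) (Fin γ) (ZMod 2)) (D : Matrix (Fin δ) (Fin δ) (ZMod 4)) :
    G γ δ →+ G γ δ where
  toFun p := (A *ᵥ p.1 + B *ᵥ (π ∘ p.2), ι ∘ (C *ᵥ p.1) + D *ᵥ p.2)
  map_zero' := by ext <;> simp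
  map_add' p q := by
    ext i
    · simp [mulVec_add]; abel
    · simp [mulVec_add]; abel

section BlockHom

variable {A : Matrix (Fin γ) (Fin γ) (ZMod 2)} {B : Matrix (Fin γ) (Fin δ) (ZMod 2)}
  {C : Matrix (Fin δ) (Fin γ) (ZMod 2)} {D : Matrix (Fin δ) (Fin δ) (ZMod 4)}

theorem blockHom_apply (p : G γ δ) :
    blockHom A B C D p = (A *ᵥ p.1 + B *ᵥ (π ∘ p.2), ι ∘ (C *ᵥ p.1) + D *ᵥ p.2) := rfl

theorem blockHom_inl_single (j : Fin γ) :
    blockHom A B C D (Pi.single j 1, 0) = (A.col j, ι ∘ C.col j) := by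
  simp [blockHom_apply]

theorem blockHom_inr_single (j : Fin δ) :
    blockHom A B C D (0, Pi.single j 1) = (B.col j, D.col j) := by
  have hπ : π ∘ Pi.single j 1 = Pi.single j 1 := by
    rw [← π.map_one]
    exact (Pi.single_op (fun _ => π) (fun _ => π.map_zero) j 1).symm
  simp [blockHom_apply, hπ]

theorem blockHom_inr_ι (z : Fin δ → ZMod 2) :
    blockHom A B C D (0, ι ∘ z) = (0, ι ∘ (D.map π *ᵥ z)) := by
  simp [blockHom_apply, mulVec_comp_ι, π_comp_ι]

theorem blockHom_eq_inl_mulVec {z : Fin γ → ZMod 2} {u : Fin δ → ZMod 2}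
    (hu : D.map π *ᵥ u = C *ᵥ z) : blockHom A B C D (z, ι ∘ u) = (A *ᵥ z, 0) := by
  ext i
  · simp [blockHom_apply, π_comp_ι]
  · simp [blockHom_apply, mulVec_comp_ι, hu, ← map_add, CharTwo.add_self_eq_zero]

theorem blockHom_injective (hA : IsUnit A) (hD : IsUnit (D.map π)) :
    Injective (blockHom A B C D) := by
  rw [injective_iff_map_eq_zero]
  rintro ⟨x, y⟩ h
  obtain ⟨h₁, h₂⟩ := Prod.ext_iff.1 h
  simp only [blockHom_apply, Prod.fst_zero, Prod.snd_zero] at h₁ h₂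
  have hπy : π ∘ y = 0 := by
    apply mulVec_injective_of_isUnit hD
    ext j
    simpa [π_ι, π.map_mulVec] using congrArg π (congrFun h₂ j)
  have hx : x = 0 := mulVec_injective_of_isUnit hA (by simpa [hπy] using h₁)
  have hy : y = 0 :=
    mulVec_injective_of_isUnit ((isUnit_map_iff π D).1 hD) (by simpa [hx] using h₂)
  simp [hx, hy]

theorem isUnit_of_blockHom_injective (h : Injective (blockHom A B C D)) :
    IsUnit A ∧ IsUnit (D.map π) := by
  have hD : IsUnit (D.map π) := by
    rw [← mulVec_injective_iff_isUnit]
    intro z w hzw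
    have := h (a₁ := (0, ι ∘ z)) (a₂ := (0, ι ∘ w)) (by simp only [blockHom_inr_ι, hzw])
    exact ι_injective.comp_left (congrArg Prod.snd this)
  refine ⟨?_, hD⟩
  rw [← mulVec_injective_iff_isUnit]
  intro z w hzw
  obtain ⟨u, hu⟩ := mulVec_surjective_iff_isUnit.2 hD (C *ᵥ z)
  obtain ⟨v, hv⟩ := mulVec_surjective_iff_isUnit.2 hD (C *ᵥ w)
  have := h (a₁ := (z, ι ∘ u)) (a₂ := (w, ι ∘ v))
    (by rw [blockHom_eq_inl_mulVec hu, blockHom_eq_inl_mulVec hv, hzw])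
  exact congrArg Prod.fst this

theorem blockHom_bijective_iff : Bijective (blockHom A B C D) ↔ IsUnit A ∧ IsUnit D := by
  rw [← Finite.injective_iff_bijective, ← isUnit_map_iff π D]
  exact ⟨isUnit_of_blockHom_injective, fun h => blockHom_injective h.1 h.2⟩

end BlockHom

-- The blocks of `[[A, B], [C, D]]` in the order `A, D, B, C`, so that invertibility is a
-- condition on the first two factors.
abbrev Blocks (γ δ : ℕ) :=
  Matrix (Fin γ) (Fin γ) (ZMod 2) × Matrix (Fin δ) (Fin δ) (ZMod 4) ×
    Matrix (Fin γ) (Fin δ) (ZMod 2) × Matrix (Fin δ) (Fin γ) (ZMod 2)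

theorem add_self_apply_inl_single (f : G γ δ →+ G γ δ) (j : Fin γ) :
    f (Pi.single j 1, 0) + f (Pi.single j 1, 0) = 0 := by
  rw [← map_add, Prod.mk_add_mk, ← Pi.single_add, add_zero, CharTwo.add_self_eq_zero,
    Pi.single_zero, Prod.mk_zero_zero, map_zero]

def blockEquiv (γ δ : ℕ) : Blocks γ δ ≃ (G γ δ →+ G γ δ) where
  toFun := fun ⟨A, D, B, C⟩ => blockHom A B C D
  invFun f :=
    (of fun i j => (f (Pi.single j 1, 0)).1 i, of fun i j => (f (0, Pi.single j 1)).2 i,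
      of fun i j => (f (0, Pi.single j 1)).1 i, of fun i j => half ((f (Pi.single j 1, 0)).2 i))
  left_inv := by
    rintro ⟨A, D, B, C⟩
    ext <;> simp [blockHom_inl_single, blockHom_inr_single, half_ι]
  right_inv f := by
    refine AddMonoidHom.ext_zmod_pi_prod (fun j => ?_) (fun j => ?_)
    · rw [blockHom_inl_single]
      ext i
      · rfl
      · exact ι_half_of_add_self _ (congrFun (congrArg Prod.snd (add_self_apply_inl_single f j)) i)
    · rw [blockHom_inr_single]
      rfl

theorem card_addAut (γ δ : ℕ) :
    Nat.card (G γ δ ≃+ G γ δ) =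
      Nat.card {A : Matrix (Fin γ) (Fin γ) (ZMod 2) // IsUnit A} *
        (Nat.card {D : Matrix (Fin δ) (Fin δ) (ZMod 4) // IsUnit D} *
          (2 ^ (γ * δ) * 2 ^ (δ * γ))) := by
  rw [Nat.card_congr (AddEquiv.equivBijectiveHom _),
    ← Nat.card_congr ((blockEquiv γ δ).subtypeEquiv (p := fun q => IsUnit q.1 ∧ IsUnit q.2.1)
      fun _ => blockHom_bijective_iff.symm),
    Nat.card_congr (Equiv.subtypeProdEquivProd (p := IsUnit)
      (q := fun r : Matrix (Fin δ) (Fin δ) (ZMod 4) × _ => IsUnit r.1)),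
    Nat.card_prod, Nat.card_congr Equiv.prodSubtypeFstEquivSubtypeProd, Nat.card_prod,
    Nat.card_prod, natCard_zmod, natCard_zmod]

end AutZ2Z4

theorem stmt18 (γ δ : ℕ) :
    Nat.card (((Fin γ → ZMod 2) × (Fin δ → ZMod 4)) ≃+
              ((Fin γ → ZMod 2) × (Fin δ → ZMod 4)))
      = 2 ^ (δ ^ 2 + γ * δ + δ * (δ - 1) / 2) * (∏ j ∈ Finset.range δ, (2 ^ (j + 1) - 1)) *
        2 ^ (δ * γ + γ * (γ - 1) / 2) * (∏ i ∈ Finset.range γ, (2 ^ (i + 1) - 1)) := by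
  rw [AutZ2Z4.card_addAut, AutZ2Z4.card_isUnit_zmod_four, Matrix.card_isUnit_zmod_two,
    Matrix.card_isUnit_zmod_two]
  ring
end
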